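/- arXiv:1908.02218 — 4 statements merged into one kernel-verified Lean document; each statement's English description precedes it below -/
import Mathlib

section
/- Let P, Q be probability measures and R_MS, R_MC, R_AU measurable events such that R_MC and R_AU are each independent of R_MS under both P and Q. Define R_C := (R_MS ∩ R_AU) ∪ (R_MSᶜ ∩ R_MC), α_MS := P(R_MS), α*_MS := Q(R_MS), Δ_θ := P(R_MC) − P(R_AU), Δ_Q := Q(R_AU) − Q(R_MC). If Δ_θ + Δ_Q > 0 and λ* := Δ_Q/(Δ_θ + Δ_Q), then P_{λ*}(R_C) = (Δ_θ·Δ_Q/(Δ_θ + Δ_Q))·(α*_MS − α_MS) + P_{λ*}(R_MC), where P_λ(A) := λ·P(A) + (1−λ)·Q(A). -/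
open MeasureTheory Set

lemma helper_comb {Ω : Type*} [MeasurableSpace Ω] (μ : Measure Ω)
    [IsProbabilityMeasure μ] (RMS RMC RAU : Set Ω)
    (hMS : MeasurableSet RMS) (hMC : MeasurableSet RMC)
    (hMCi : μ (RMC ∩ RMS) = μ RMC * μ RMS)
    (hAUi : μ (RAU ∩ RMS) = μ RAU * μ RMS) :
    (μ ((RMS ∩ RAU) ∪ (RMSᶜ ∩ RMC))).toReal
      = (μ RAU).toReal * (μ RMS).toReal
        + (μ RMC).toReal * (1 - (μ RMS).toReal) := by
  have hdisj : Disjoint (RMS ∩ RAU) (RMSᶜ ∩ RMC) :=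
    Disjoint.mono inter_subset_left inter_subset_left disjoint_compl_right
  rw [measure_union hdisj (hMS.compl.inter hMC)]
  have h1 : μ (RMS ∩ RAU) = μ RAU * μ RMS := by rw [inter_comm]; exact hAUi
  have h2 : μ (RMSᶜ ∩ RMC) + μ (RMC ∩ RMS) = μ RMC := by
    rw [show RMSᶜ ∩ RMC = RMC \ RMS by rw [diff_eq, inter_comm], measure_diff_add_inter _ hMS]
  have hfin : ∀ s : Set Ω, μ s ≠ ⊤ := fun s => measure_ne_top μ s
  have h2' : (μ (RMSᶜ ∩ RMC)).toReal = (μ RMC).toReal - (μ RMC).toReal * (μ RMS).toReal := by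
    have := congrArg ENNReal.toReal h2
    rw [ENNReal.toReal_add (hfin _) (hfin _), hMCi, ENNReal.toReal_mul] at this
    linarith
  rw [ENNReal.toReal_add (hfin _) (hfin _), h1, ENNReal.toReal_mul, h2']
  ring

theorem stmt_2 {Ω : Type*} [MeasurableSpace Ω]
    (P Q : Measure Ω) [IsProbabilityMeasure P] [IsProbabilityMeasure Q]
    (RMS RMC RAU : Set Ω)
    (hMS : MeasurableSet RMS) (hMC : MeasurableSet RMC) (hAU : MeasurableSet RAU)
    (hPMC : P (RMC ∩ RMS) = P RMC * P RMS)
    (hPAU : P (RAU ∩ RMS) = P RAU * P RMS)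
    (hQMC : Q (RMC ∩ RMS) = Q RMC * Q RMS)
    (hQAU : Q (RAU ∩ RMS) = Q RAU * Q RMS)
    (αMS αsMS dθ dQ lstar : ℝ)
    (hα : αMS = (P RMS).toReal) (hαs : αsMS = (Q RMS).toReal)
    (hdθ : dθ = (P RMC).toReal - (P RAU).toReal)
    (hdQ : dQ = (Q RAU).toReal - (Q RMC).toReal)
    (hpos : dθ + dQ > 0)
    (hl : lstar = dQ / (dθ + dQ)) :
    lstar * (P ((RMS ∩ RAU) ∪ (RMSᶜ ∩ RMC))).toReal
      + (1 - lstar) * (Q ((RMS ∩ RAU) ∪ (RMSᶜ ∩ RMC))).toReal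
      = (dθ * dQ / (dθ + dQ)) * (αsMS - αMS)
        + (lstar * (P RMC).toReal + (1 - lstar) * (Q RMC).toReal) := by
  rw [helper_comb P RMS RMC RAU hMS hMC hPMC hPAU,
      helper_comb Q RMS RMC RAU hMS hMC hQMC hQAU]
  have hne : dθ + dQ ≠ 0 := ne_of_gt hpos
  subst hα hαs hdθ hdQ hl
  field_simp
  ring
end

section
/- Under the hypotheses of the paper's Lemma 1 ((I) Δ_θ = P(R_MC) − P(R_AU) > 0, (II) Δ_Q = Q(R_AU) − Q(R_MC) > 0, (III) Q(R_MS) > P(R_MS), (IV) independence of R_MC and R_AU from R_MS under both P and Q), the set of λ ∈ (0,1) for which the combined procedure strictly beats both main tests, i.e., {λ : P_λ(R_C) > P_λ(R_MC) and P_λ(R_C) > P_λ(R_AU)}, is a nonempty open interval containing λ* = Δ_Q/(Δ_θ + Δ_Q). -/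
open MeasureTheory Set

lemma union_toReal_aux {Ω : Type*} [MeasurableSpace Ω] (μ : Measure Ω) [IsProbabilityMeasure μ]
    (RMS RMC RAU : Set Ω) (hMS : MeasurableSet RMS) (hMC : MeasurableSet RMC)
    (hind1 : μ (RMC ∩ RMS) = μ RMC * μ RMS)
    (hind2 : μ (RAU ∩ RMS) = μ RAU * μ RMS) :
    (μ ((RMS ∩ RAU) ∪ (RMSᶜ ∩ RMC))).toReal
      = (μ RAU).toReal * (μ RMS).toReal
        + (μ RMC).toReal * (1 - (μ RMS).toReal) := by
  have hdisj : Disjoint (RMS ∩ RAU) (RMSᶜ ∩ RMC) :=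
    Disjoint.mono inter_subset_left inter_subset_left disjoint_compl_right
  have hmeas2 : MeasurableSet (RMSᶜ ∩ RMC) := hMS.compl.inter hMC
  rw [measure_union hdisj hmeas2]
  have h1 : μ (RMS ∩ RAU) = μ RAU * μ RMS := by rw [inter_comm]; exact hind2
  have hce : RMSᶜ ∩ RMC = RMC \ RMS := by ext x; simp [Set.mem_diff]; tauto
  have h3 : μ (RMC ∩ RMS) + μ (RMC \ RMS) = μ RMC := measure_inter_add_diff RMC hMS
  have h2 : (μ (RMC \ RMS)).toReal
      = (μ RMC).toReal - (μ RMC).toReal * (μ RMS).toReal := by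
    have := congrArg ENNReal.toReal h3
    rw [ENNReal.toReal_add (measure_ne_top _ _) (measure_ne_top _ _), hind1,
      ENNReal.toReal_mul] at this
    linarith
  rw [ENNReal.toReal_add (measure_ne_top _ _) (measure_ne_top _ _), h1,
    ENNReal.toReal_mul, hce, h2]
  ring

theorem stmt_7 {Ω : Type*} [MeasurableSpace Ω]
    (P Q : Measure Ω) [IsProbabilityMeasure P] [IsProbabilityMeasure Q]
    (RMS RMC RAU : Set Ω)
    (hMS : MeasurableSet RMS) (hMC : MeasurableSet RMC) (hAU : MeasurableSet RAU)
    (dθ dQ : ℝ)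
    (hdθ : dθ = (P RMC).toReal - (P RAU).toReal)
    (hdQ : dQ = (Q RAU).toReal - (Q RMC).toReal)
    (hI : dθ > 0) (hII : dQ > 0)
    (hIII : (Q RMS).toReal > (P RMS).toReal)
    (hPMC : P (RMC ∩ RMS) = P RMC * P RMS)
    (hPAU : P (RAU ∩ RMS) = P RAU * P RMS)
    (hQMC : Q (RMC ∩ RMS) = Q RMC * Q RMS)
    (hQAU : Q (RAU ∩ RMS) = Q RAU * Q RMS) :
    ∃ a b : ℝ, a < b ∧ dQ / (dθ + dQ) ∈ Set.Ioo a b ∧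
      {l : ℝ | l ∈ Set.Ioo (0:ℝ) 1 ∧
        l * (P ((RMS ∩ RAU) ∪ (RMSᶜ ∩ RMC))).toReal
          + (1 - l) * (Q ((RMS ∩ RAU) ∪ (RMSᶜ ∩ RMC))).toReal
          > l * (P RMC).toReal + (1 - l) * (Q RMC).toReal ∧
        l * (P ((RMS ∩ RAU) ∪ (RMSᶜ ∩ RMC))).toReal
          + (1 - l) * (Q ((RMS ∩ RAU) ∪ (RMSᶜ ∩ RMC))).toReal
          > l * (P RAU).toReal + (1 - l) * (Q RAU).toReal}
      = Set.Ioo a b := by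
  have hPu := union_toReal_aux P RMS RMC RAU hMS hMC hPMC hPAU
  have hQu := union_toReal_aux Q RMS RMC RAU hMS hMC hQMC hQAU
  set m := (P RMS).toReal with hm
  set mq := (Q RMS).toReal with hmq
  set pA := (P RAU).toReal with hpA
  set pC := (P RMC).toReal with hpC
  set qA := (Q RAU).toReal with hqA
  set qC := (Q RMC).toReal with hqC
  have hm0 : 0 ≤ m := ENNReal.toReal_nonneg
  have hmq1 : mq ≤ 1 := by
    have h1 : Q RMS ≤ 1 := prob_le_one
    have := ENNReal.toReal_mono (by norm_num) h1
    simpa using this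
  have hm1 : m < 1 := lt_of_lt_of_le hIII hmq1
  have hmq0 : 0 < mq := lt_of_le_of_lt hm0 hIII
  -- denominators
  have hD1 : 0 < (1 - m) * dθ + (1 - mq) * dQ := by nlinarith
  have hD2 : 0 < m * dθ + mq * dQ := by nlinarith
  have hD0 : 0 < dθ + dQ := by linarith
  refine ⟨(1 - mq) * dQ / ((1 - m) * dθ + (1 - mq) * dQ),
    mq * dQ / (m * dθ + mq * dQ), ?_, ?_, ?_⟩
  · rw [div_lt_div_iff₀ hD1 hD2]
    nlinarith [mul_pos hI hII, mul_pos hmq0 hI]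
  · constructor
    · rw [div_lt_div_iff₀ hD1 hD0]
      nlinarith [mul_pos hI hII]
    · rw [div_lt_div_iff₀ hD0 hD2]
      nlinarith [mul_pos hI hII]
  · ext l
    simp only [mem_setOf_eq, mem_Ioo, hPu, hQu]
    constructor
    · rintro ⟨⟨hl0, hl1⟩, hF, hG⟩
      constructor
      · rw [div_lt_iff₀ hD1, hdθ, hdQ]
        nlinarith [hG]
      · rw [lt_div_iff₀ hD2, hdθ, hdQ]
        nlinarith [hF]
    · rintro ⟨ha, hb⟩
      rw [div_lt_iff₀ hD1] at ha
      rw [lt_div_iff₀ hD2] at hb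
      have hl0 : 0 < l := by
        by_contra h
        push_neg at h
        have h1 : l * ((1 - m) * dθ + (1 - mq) * dQ) ≤ 0 :=
          mul_nonpos_of_nonpos_of_nonneg h hD1.le
        have h2 : 0 ≤ (1 - mq) * dQ := mul_nonneg (by linarith) hII.le
        linarith
      have hl1 : l < 1 := by
        by_contra h
        push_neg at h
        have h1 : 1 * (m * dθ + mq * dQ) ≤ l * (m * dθ + mq * dQ) :=
          mul_le_mul_of_nonneg_right h hD2.le
        have h2 : 0 ≤ m * dθ := mul_nonneg hm0 hI.le
        linarith
      rw [hdθ, hdQ] at ha hb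
      refine ⟨⟨hl0, hl1⟩, ?_, ?_⟩
      · linarith [hb]
      · linarith [ha]
end

section
/- Let P, Q be probability measures, R_MS, R_MC, R_AU events, and δ ≥ 0 such that |P(R_MC | R_MS) − P(R_MC | R_MSᶜ)| ≤ δ, |P(R_AU | R_MS) − P(R_AU | R_MSᶜ)| ≤ δ, |Q(R_MC | R_MS) − Q(R_MC | R_MSᶜ)| ≤ δ, |Q(R_AU | R_MS) − Q(R_AU | R_MSᶜ)| ≤ δ, where all conditioning events have positive probability. With R_C := (R_MS ∩ R_AU) ∪ (R_MSᶜ ∩ R_MC), Δ_θ := P(R_MC) − P(R_AU) > 0, Δ_Q := Q(R_AU) − Q(R_MC) > 0, α_MS := P(R_MS), α*_MS := Q(R_MS), and λ* := Δ_Q/(Δ_θ + Δ_Q), one has P_{λ*}(R_C) ≥ (Δ_θ·Δ_Q/(Δ_θ+Δ_Q))·(α*_MS − α_MS) + P_{λ*}(R_MC) − 2δ. In particular, if (Δ_θ·Δ_Q/(Δ_θ+Δ_Q))·(α*_MS − α_MS) > 2δ, then P_{λ*}(R_C) > P_{λ*}(R_MC) = P_{λ*}(R_AU). -/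
open MeasureTheory Set

lemma aux_split {Ω : Type*} [MeasurableSpace Ω] (μ : Measure Ω) [IsProbabilityMeasure μ]
    (RMS A : Set Ω) (hMS : MeasurableSet RMS) :
    (μ A).toReal = (μ (A ∩ RMS)).toReal + (μ (A ∩ RMSᶜ)).toReal := by
  have h : μ (A ∩ RMS) + μ (A \ RMS) = μ A := measure_inter_add_diff A hMS
  have h2 := congrArg ENNReal.toReal h
  rw [ENNReal.toReal_add (measure_ne_top μ _) (measure_ne_top μ _)] at h2
  simpa [Set.diff_eq] using h2.symm

lemma aux_indep {Ω : Type*} [MeasurableSpace Ω] (μ : Measure Ω) [IsProbabilityMeasure μ]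
    (RMS A : Set Ω) (hMS : MeasurableSet RMS) (δ : ℝ)
    (h0 : 0 < (μ RMS).toReal) (h1 : 0 < (μ RMSᶜ).toReal)
    (hb : |(μ (A ∩ RMS)).toReal / (μ RMS).toReal
          - (μ (A ∩ RMSᶜ)).toReal / (μ RMSᶜ).toReal| ≤ δ) :
    |(μ (A ∩ RMS)).toReal - (μ RMS).toReal * (μ A).toReal| ≤ δ := by
  set s := (μ RMS).toReal with hs
  set s' := (μ RMSᶜ).toReal with hs'
  set a := (μ (A ∩ RMS)).toReal with ha
  set b := (μ (A ∩ RMSᶜ)).toReal with hbb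
  have hsum : s + s' = 1 := by
    have h : μ RMS + μ RMSᶜ = 1 := by rw [measure_add_measure_compl hMS, measure_univ]
    have h2 := congrArg ENNReal.toReal h
    rw [ENNReal.toReal_add (measure_ne_top μ _) (measure_ne_top μ _)] at h2
    simpa using h2
  have hA : (μ A).toReal = a + b := aux_split μ RMS A hMS
  have key : a - s * (μ A).toReal = s * s' * (a / s - b / s') := by
    rw [hA]
    field_simp
    linear_combination (-a) * hsum
  have hss : s * s' ≤ 1 := by nlinarith
  calc |a - s * (μ A).toReal| = s * s' * |a / s - b / s'| := by
        rw [key, abs_mul, abs_of_pos (mul_pos h0 h1)]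
    _ ≤ s * s' * δ := mul_le_mul_of_nonneg_left hb (le_of_lt (mul_pos h0 h1))
    _ ≤ δ := by nlinarith [abs_nonneg (a / s - b / s'), le_trans (abs_nonneg _) hb]

theorem stmt_11 {Ω : Type*} [MeasurableSpace Ω]
    (P Q : Measure Ω) [IsProbabilityMeasure P] [IsProbabilityMeasure Q]
    (RMS RMC RAU : Set Ω)
    (hMS : MeasurableSet RMS) (hMC : MeasurableSet RMC) (hAU : MeasurableSet RAU)
    (δ : ℝ) (hδ : 0 ≤ δ)
    (hP0 : 0 < (P RMS).toReal) (hP1 : 0 < (P RMSᶜ).toReal)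
    (hQ0 : 0 < (Q RMS).toReal) (hQ1 : 0 < (Q RMSᶜ).toReal)
    (hbPMC : |(P (RMC ∩ RMS)).toReal / (P RMS).toReal
              - (P (RMC ∩ RMSᶜ)).toReal / (P RMSᶜ).toReal| ≤ δ)
    (hbPAU : |(P (RAU ∩ RMS)).toReal / (P RMS).toReal
              - (P (RAU ∩ RMSᶜ)).toReal / (P RMSᶜ).toReal| ≤ δ)
    (hbQMC : |(Q (RMC ∩ RMS)).toReal / (Q RMS).toReal
              - (Q (RMC ∩ RMSᶜ)).toReal / (Q RMSᶜ).toReal| ≤ δ)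
    (hbQAU : |(Q (RAU ∩ RMS)).toReal / (Q RMS).toReal
              - (Q (RAU ∩ RMSᶜ)).toReal / (Q RMSᶜ).toReal| ≤ δ)
    (dθ dQ αMS αsMS lstar : ℝ)
    (hdθ : dθ = (P RMC).toReal - (P RAU).toReal)
    (hdQ : dQ = (Q RAU).toReal - (Q RMC).toReal)
    (hI : dθ > 0) (hII : dQ > 0)
    (hαMS : αMS = (P RMS).toReal) (hαsMS : αsMS = (Q RMS).toReal)
    (hl : lstar = dQ / (dθ + dQ)) :
    (lstar * (P ((RMS ∩ RAU) ∪ (RMSᶜ ∩ RMC))).toReal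
      + (1 - lstar) * (Q ((RMS ∩ RAU) ∪ (RMSᶜ ∩ RMC))).toReal
      ≥ (dθ * dQ / (dθ + dQ)) * (αsMS - αMS)
        + (lstar * (P RMC).toReal + (1 - lstar) * (Q RMC).toReal) - 2 * δ) ∧
    ((dθ * dQ / (dθ + dQ)) * (αsMS - αMS) > 2 * δ →
      (lstar * (P ((RMS ∩ RAU) ∪ (RMSᶜ ∩ RMC))).toReal
        + (1 - lstar) * (Q ((RMS ∩ RAU) ∪ (RMSᶜ ∩ RMC))).toReal
        > lstar * (P RMC).toReal + (1 - lstar) * (Q RMC).toReal) ∧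
      lstar * (P RMC).toReal + (1 - lstar) * (Q RMC).toReal
        = lstar * (P RAU).toReal + (1 - lstar) * (Q RAU).toReal) := by
  have hsum : 0 < dθ + dQ := by linarith
  have hne : dθ + dQ ≠ 0 := ne_of_gt hsum
  have hl0 : 0 ≤ lstar := by rw [hl]; positivity
  have hl1 : 0 ≤ 1 - lstar := by
    rw [hl]
    rw [sub_nonneg, div_le_one hsum]
    linarith
  -- measure of R_C
  have hdisj : Disjoint (RMS ∩ RAU) (RMSᶜ ∩ RMC) :=
    Disjoint.mono inter_subset_left inter_subset_left disjoint_compl_right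
  have hmeas : MeasurableSet (RMSᶜ ∩ RMC) := hMS.compl.inter hMC
  have hPC : (P ((RMS ∩ RAU) ∪ (RMSᶜ ∩ RMC))).toReal
      = (P (RAU ∩ RMS)).toReal + (P (RMC ∩ RMSᶜ)).toReal := by
    rw [measure_union hdisj hmeas, ENNReal.toReal_add (measure_ne_top P _) (measure_ne_top P _),
      inter_comm RMS RAU, inter_comm RMSᶜ RMC]
  have hQC : (Q ((RMS ∩ RAU) ∪ (RMSᶜ ∩ RMC))).toReal
      = (Q (RAU ∩ RMS)).toReal + (Q (RMC ∩ RMSᶜ)).toReal := by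
    rw [measure_union hdisj hmeas, ENNReal.toReal_add (measure_ne_top Q _) (measure_ne_top Q _),
      inter_comm RMS RAU, inter_comm RMSᶜ RMC]
  -- splits
  have sPMC := aux_split P RMS RMC hMS
  have sPAU := aux_split P RMS RAU hMS
  have sQMC := aux_split Q RMS RMC hMS
  have sQAU := aux_split Q RMS RAU hMS
  -- approximate independence bounds
  have bPMC := abs_le.mp (aux_indep P RMS RMC hMS δ hP0 hP1 hbPMC)
  have bPAU := abs_le.mp (aux_indep P RMS RAU hMS δ hP0 hP1 hbPAU)
  have bQMC := abs_le.mp (aux_indep Q RMS RMC hMS δ hQ0 hQ1 hbQMC)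
  have bQAU := abs_le.mp (aux_indep Q RMS RAU hMS δ hQ0 hQ1 hbQAU)
  -- key differences
  have e1 : (P (RAU ∩ RMS)).toReal - (P (RMC ∩ RMS)).toReal ≥ -(αMS * dθ) - 2 * δ := by
    rw [hαMS, hdθ]
    ring_nf
    ring_nf at bPMC bPAU ⊢
    linarith [bPMC.1, bPMC.2, bPAU.1, bPAU.2]
  have e2 : (Q (RAU ∩ RMS)).toReal - (Q (RMC ∩ RMS)).toReal ≥ αsMS * dQ - 2 * δ := by
    rw [hαsMS, hdQ]
    ring_nf
    ring_nf at bQMC bQAU ⊢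
    linarith [bQMC.1, bQMC.2, bQAU.1, bQAU.2]
  have c1 : lstar * ((P (RAU ∩ RMS)).toReal - (P (RMC ∩ RMS)).toReal)
      ≥ lstar * (-(αMS * dθ) - 2 * δ) := mul_le_mul_of_nonneg_left e1 hl0
  have c2 : (1 - lstar) * ((Q (RAU ∩ RMS)).toReal - (Q (RMC ∩ RMS)).toReal)
      ≥ (1 - lstar) * (αsMS * dQ - 2 * δ) := mul_le_mul_of_nonneg_left e2 hl1
  have d1 : lstar * (-(αMS * dθ) - 2 * δ) = -(dθ * dQ / (dθ + dQ) * αMS) - 2 * lstar * δ := by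
    rw [hl]; field_simp
  have d2 : (1 - lstar) * (αsMS * dQ - 2 * δ)
      = dθ * dQ / (dθ + dQ) * αsMS - 2 * (1 - lstar) * δ := by
    rw [hl]; field_simp; ring
  have key : lstar * (P ((RMS ∩ RAU) ∪ (RMSᶜ ∩ RMC))).toReal
      + (1 - lstar) * (Q ((RMS ∩ RAU) ∪ (RMSᶜ ∩ RMC))).toReal
      ≥ (dθ * dQ / (dθ + dQ)) * (αsMS - αMS)
        + (lstar * (P RMC).toReal + (1 - lstar) * (Q RMC).toReal) - 2 * δ := by
    rw [hPC, hQC]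
    rw [d1] at c1; rw [d2] at c2
    rw [sPMC, sQMC]
    linarith [c1, c2]
  refine ⟨key, fun hgap => ⟨by linarith, ?_⟩⟩
  have hK : lstar * dθ = (1 - lstar) * dQ := by
    rw [hl]; field_simp; ring
  rw [hdθ, hdQ] at hK
  linarith [hK]
end

section
/- Let P, Q be probability measures and R_MS, R_MC, R_AU events with R_MC and R_AU each independent of R_MS under both P and Q and R_C := (R_MS ∩ R_AU) ∪ (R_MSᶜ ∩ R_MC). Suppose under both P and Q the main null hypothesis holds, with sizes P(R_MC) ≤ α, Q(R_AU) ≤ α, but Q(R_MC) = β > α (the MC test is anti-conservative under Q) and P(R_AU) ≤ α. Then for every λ ∈ [0,1], P_λ(R_C) ≤ α + (1−λ)·(1 − Q(R_MS))·(β − α). In particular the size inflation of the combined procedure under the mixture is at most (1 − Q(R_MS))·(β − α), the probability of failing to detect the misspecification times the excess size of the MC test under the violating distribution. -/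
open MeasureTheory Set

lemma aux_comb {Ω : Type*} [MeasurableSpace Ω]
    (μ : Measure Ω) [IsProbabilityMeasure μ]
    (RMS RMC RAU : Set Ω)
    (hMS : MeasurableSet RMS) (hMC : MeasurableSet RMC)
    (hmc : μ (RMC ∩ RMS) = μ RMC * μ RMS)
    (hau : μ (RAU ∩ RMS) = μ RAU * μ RMS) :
    (μ ((RMS ∩ RAU) ∪ (RMSᶜ ∩ RMC))).toReal
      = (μ RAU).toReal * (μ RMS).toReal
        + (μ RMC).toReal * (1 - (μ RMS).toReal) := by
  have hdisj : Disjoint (RMS ∩ RAU) (RMSᶜ ∩ RMC) := by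
    apply Set.disjoint_left.2
    rintro x ⟨h1, _⟩ ⟨h2, _⟩
    exact h2 h1
  have hu : μ ((RMS ∩ RAU) ∪ (RMSᶜ ∩ RMC)) = μ (RMS ∩ RAU) + μ (RMSᶜ ∩ RMC) :=
    measure_union hdisj (hMS.compl.inter hMC)
  have hA : μ (RMS ∩ RAU) = μ RAU * μ RMS := by rw [Set.inter_comm]; exact hau
  have hsplit : μ (RMC ∩ RMS) + μ (RMC \ RMS) = μ RMC := measure_inter_add_diff RMC hMS
  have hB : RMSᶜ ∩ RMC = RMC \ RMS := by rw [Set.diff_eq, Set.inter_comm]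
  have fin : ∀ s : Set Ω, μ s ≠ ⊤ := fun s => measure_ne_top μ s
  have hMSle : (μ RMS).toReal ≤ 1 := by
    have := prob_le_one (μ := μ) (s := RMS)
    simpa [ENNReal.toReal_le_toReal (fin RMS) ENNReal.one_ne_top] using
      ENNReal.toReal_mono ENNReal.one_ne_top this
  have hsr : (μ RMC).toReal * (μ RMS).toReal + (μ (RMC \ RMS)).toReal = (μ RMC).toReal := by
    have := congrArg ENNReal.toReal hsplit
    rwa [ENNReal.toReal_add (by rw [hmc]; exact ENNReal.mul_ne_top (fin _) (fin _)) (fin _),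
      hmc, ENNReal.toReal_mul] at this
  rw [hu, ENNReal.toReal_add (fin _) (fin _), hA, ENNReal.toReal_mul, hB]
  linarith

theorem stmt_13 {Ω : Type*} [MeasurableSpace Ω]
    (P Q : Measure Ω) [IsProbabilityMeasure P] [IsProbabilityMeasure Q]
    (RMS RMC RAU : Set Ω)
    (hMS : MeasurableSet RMS) (hMC : MeasurableSet RMC) (hAU : MeasurableSet RAU)
    (hPMC : P (RMC ∩ RMS) = P RMC * P RMS)
    (hPAU : P (RAU ∩ RMS) = P RAU * P RMS)
    (hQMC : Q (RMC ∩ RMS) = Q RMC * Q RMS)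
    (hQAU : Q (RAU ∩ RMS) = Q RAU * Q RMS)
    (α β : ℝ)
    (hPMCsize : (P RMC).toReal ≤ α)
    (hQAUsize : (Q RAU).toReal ≤ α)
    (hβ : (Q RMC).toReal = β) (hβα : β > α)
    (hPAUsize : (P RAU).toReal ≤ α) :
    ∀ l ∈ Set.Icc (0:ℝ) 1,
      l * (P ((RMS ∩ RAU) ∪ (RMSᶜ ∩ RMC))).toReal
        + (1 - l) * (Q ((RMS ∩ RAU) ∪ (RMSᶜ ∩ RMC))).toReal
      ≤ α + (1 - l) * (1 - (Q RMS).toReal) * (β - α) := by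
  rintro l ⟨hl0, hl1⟩
  rw [aux_comb P RMS RMC RAU hMS hMC hPMC hPAU,
      aux_comb Q RMS RMC RAU hMS hMC hQMC hQAU]
  set p := (P RMS).toReal
  set q := (Q RMS).toReal
  have hp0 : 0 ≤ p := ENNReal.toReal_nonneg
  have hq0 : 0 ≤ q := ENNReal.toReal_nonneg
  have hp1 : p ≤ 1 := by
    simpa using ENNReal.toReal_mono ENNReal.one_ne_top (prob_le_one (μ := P) (s := RMS))
  have hq1 : q ≤ 1 := by
    simpa using ENNReal.toReal_mono ENNReal.one_ne_top (prob_le_one (μ := Q) (s := RMS))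
  have hPa : 0 ≤ (P RAU).toReal := ENNReal.toReal_nonneg
  have hQa : 0 ≤ (Q RAU).toReal := ENNReal.toReal_nonneg
  rw [hβ]
  nlinarith [mul_nonneg (mul_nonneg hl0 hp0) (sub_nonneg.2 hPAUsize),
    mul_nonneg (mul_nonneg hl0 (sub_nonneg.2 hp1)) (sub_nonneg.2 hPMCsize),
    mul_nonneg (mul_nonneg (sub_nonneg.2 hl1) hq0) (sub_nonneg.2 hQAUsize)]
end
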